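/- arXiv:2310.17538 — 3 statements merged into one kernel-verified Lean document; each statement's English description precedes it below -/
import Mathlib

section
/- Let (R_n)_{n≥1} be a nondecreasing sequence of nonnegative reals with R_n ≤ c·n for some constant c > 0, and for λ > 0 define R^λ = (1 − e^{−λ}) · Σ_{n=1}^∞ e^{−nλ} R_n. Then the following are equivalent: (i) for every a > 0, R_T = o(T^a) as T → ∞; (ii) for every a > 0, R^λ = o(λ^{−a}) as λ → 0⁺. -/
open Filter Real

/-- The discounted aggregate `R^lam = (1 - e^{-lam}) * sum_{n>=1} e^{-n lam} R_n`. -/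
noncomputable def discountedAggregate (R : ℕ → ℝ) (lam : ℝ) : ℝ :=
  (1 - Real.exp (-lam)) * ∑' n : ℕ, Real.exp (-((n : ℝ) + 1) * lam) * R (n + 1)

/-!
With `r = e^{-λ}`, the discounted aggregate is the Abel mean `(1 - r) ∑ rⁿ Rₙ`.

Since `R` is nondecreasing, every term with `n ≥ T` is at least `rⁿ R_T`, so the Abel mean is at
least `r^T R_T`; at `λ = 1/T` this reads `R_T ≤ e · R^{1/T}`, which transfers `λ`-consistency to
`T`-consistency.

Conversely, with `s = e^{-λ/2}` one has `sᵐ Rₘ ≤ sᵐ R_N + c m s^N` for all `m` (monotonicity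
below `N`, linear growth above it), whence `R^λ ≤ R_N + 4 c e^{-Nλ/2} / λ`. Taking
`N = ⌈λ⁻²⌉` gives `λ^a R_N ≤ 2^{a/2} R_N / N^{a/2}`, which tends to `0` by `T`-consistency with
exponent `a/2`, while `λ^{a-1} e^{-Nλ/2} ≤ λ^{a-1} e^{-1/(2λ)}` tends to `0` as well.
-/

open Topology

section GeometricSeries

variable {K : Type*} [NormedDivisionRing K] {r : K}

lemma hasSum_pow_succ (hr : ‖r‖ < 1) : HasSum (fun n : ℕ => r ^ (n + 1)) (r / (1 - r)) := by
  simpa only [pow_succ', div_eq_mul_inv] using (hasSum_geometric_of_norm_lt_one hr).mul_left r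

lemma hasSum_succ_mul_pow_succ (hr : ‖r‖ < 1) :
    HasSum (fun n : ℕ => ((n : K) + 1) * r ^ (n + 1)) (r / (1 - r) ^ 2) := by
  have h := hasSum_coe_mul_geometric_of_norm_lt_one hr
  rw [← hasSum_nat_add_iff' 1] at h
  simpa using h

end GeometricSeries

lemma exp_neg_div_one_sub_exp_neg_le {x : ℝ} (hx : 0 < x) :
    exp (-x) / (1 - exp (-x)) ≤ x⁻¹ := by
  have h1 : exp (-x) < 1 := exp_lt_one_iff.mpr (by linarith)
  rw [div_le_iff₀ (by linarith), inv_mul_eq_div, le_div_iff₀ hx]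
  nlinarith [add_one_le_exp x, exp_neg x, mul_inv_cancel₀ (exp_pos x).ne', exp_pos (-x)]

noncomputable def abelMean (R : ℕ → ℝ) (r : ℝ) : ℝ :=
  (1 - r) * ∑' n : ℕ, r ^ (n + 1) * R (n + 1)

lemma discountedAggregate_eq_abelMean (R : ℕ → ℝ) (lam : ℝ) :
    discountedAggregate R lam = abelMean R (exp (-lam)) := by
  unfold discountedAggregate abelMean
  congr 2 with n
  rw [← exp_nat_mul]
  push_cast
  ring_nf

section AbelMean

variable {R : ℕ → ℝ} {c r s : ℝ}

lemma summable_pow_succ_mul (hnonneg : ∀ n : ℕ, 1 ≤ n → 0 ≤ R n)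
    (hlin : ∀ n : ℕ, 1 ≤ n → R n ≤ c * n) (h0 : 0 ≤ r) (h1 : r < 1) :
    Summable fun n : ℕ => r ^ (n + 1) * R (n + 1) := by
  have hr : ‖r‖ < 1 := by rwa [norm_of_nonneg h0]
  refine .of_nonneg_of_le (fun n => mul_nonneg (by positivity) (hnonneg _ n.succ_pos))
    (fun n => ?_) ((hasSum_succ_mul_pow_succ hr).summable.mul_left c)
  have := hlin (n + 1) n.succ_pos
  push_cast at this
  calc r ^ (n + 1) * R (n + 1) ≤ r ^ (n + 1) * (c * (n + 1)) := by gcongr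
    _ = c * ((n + 1) * r ^ (n + 1)) := by ring

lemma abelMean_nonneg (hnonneg : ∀ n : ℕ, 1 ≤ n → 0 ≤ R n) (h0 : 0 ≤ r) (h1 : r ≤ 1) :
    0 ≤ abelMean R r :=
  mul_nonneg (by linarith) (tsum_nonneg fun n => mul_nonneg (by positivity) (hnonneg _ n.succ_pos))

lemma pow_mul_le_abelMean (hnonneg : ∀ n : ℕ, 1 ≤ n → 0 ≤ R n)
    (hmono : ∀ m n : ℕ, 1 ≤ m → m ≤ n → R m ≤ R n) (hlin : ∀ n : ℕ, 1 ≤ n → R n ≤ c * n)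
    (h0 : 0 ≤ r) (h1 : r < 1) {T : ℕ} (hT : 1 ≤ T) : r ^ T * R T ≤ abelMean R r := by
  obtain ⟨k, rfl⟩ : ∃ k, T = k + 1 := ⟨T - 1, by omega⟩
  have htail : ∑' m : ℕ, r ^ (k + 1) * R (k + 1) * r ^ m ≤ ∑' n : ℕ, r ^ (n + 1) * R (n + 1) := by
    refine le_trans (Summable.tsum_le_tsum (fun m => ?_) ?_ ?_)
      (tsum_comp_le_tsum_of_inj (summable_pow_succ_mul hnonneg hlin h0 h1)
        (fun n => mul_nonneg (by positivity) (hnonneg _ n.succ_pos)) (add_left_injective k))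
    · simp only [Function.comp_apply]
      rw [mul_right_comm, ← pow_add, show m + k + 1 = k + 1 + m by ring]
      exact mul_le_mul_of_nonneg_left (hmono _ _ (by omega) (by omega)) (by positivity)
    · exact (summable_geometric_of_lt_one h0 h1).mul_left _
    · exact (summable_pow_succ_mul hnonneg hlin h0 h1).comp_injective (add_left_injective k)
  rw [tsum_mul_left, tsum_geometric_of_lt_one h0 h1] at htail
  calc r ^ (k + 1) * R (k + 1) = (1 - r) * (r ^ (k + 1) * R (k + 1) * (1 - r)⁻¹) := by
        field_simp [(sub_pos.mpr h1).ne']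
    _ ≤ abelMean R r := mul_le_mul_of_nonneg_left htail (by linarith)

lemma pow_mul_le_pow_mul_add_mul_pow (hnonneg : ∀ n : ℕ, 1 ≤ n → 0 ≤ R n)
    (hmono : ∀ m n : ℕ, 1 ≤ m → m ≤ n → R m ≤ R n) (hlin : ∀ n : ℕ, 1 ≤ n → R n ≤ c * n)
    (hc : 0 ≤ c) (hs0 : 0 ≤ s) (hs1 : s ≤ 1) {m N : ℕ} (hm : 1 ≤ m) (hN : 1 ≤ N) :
    s ^ m * R m ≤ s ^ m * R N + c * m * s ^ N := by
  rcases le_or_gt m N with hmN | hNm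
  · have : s ^ m * R m ≤ s ^ m * R N := by gcongr; exact hmono m N hm hmN
    have : 0 ≤ c * m * s ^ N := by positivity
    linarith
  · have : s ^ m * R m ≤ c * m * s ^ N :=
      calc s ^ m * R m ≤ s ^ N * (c * m) :=
            mul_le_mul (pow_le_pow_of_le_one hs0 hs1 hNm.le) (hlin m hm) (hnonneg m hm)
              (by positivity)
        _ = c * m * s ^ N := by ring
    have : 0 ≤ s ^ m * R N := mul_nonneg (by positivity) (hnonneg N hN)
    linarith

lemma abelMean_sq_le (hnonneg : ∀ n : ℕ, 1 ≤ n → 0 ≤ R n)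
    (hmono : ∀ m n : ℕ, 1 ≤ m → m ≤ n → R m ≤ R n) (hlin : ∀ n : ℕ, 1 ≤ n → R n ≤ c * n)
    (hc : 0 ≤ c) (hs0 : 0 < s) (hs1 : s < 1) {N : ℕ} (hN : 1 ≤ N) :
    abelMean R (s ^ 2) ≤ R N + 2 * c * s ^ N * (s / (1 - s)) := by
  have hs : ‖s‖ < 1 := by rwa [norm_of_nonneg hs0.le]
  have hs2 : ‖s ^ 2‖ < 1 := by rw [norm_pow]; exact pow_lt_one₀ (norm_nonneg s) hs two_ne_zero
  have hterm : ∀ n : ℕ, (s ^ 2) ^ (n + 1) * R (n + 1) ≤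
      R N * (s ^ 2) ^ (n + 1) + c * s ^ N * ((n + 1) * s ^ (n + 1)) := fun n => by
    have := mul_le_mul_of_nonneg_left (pow_mul_le_pow_mul_add_mul_pow hnonneg hmono hlin hc
      hs0.le hs1.le (by omega : 1 ≤ n + 1) hN) (pow_nonneg hs0.le (n + 1))
    rw [← pow_mul, mul_comm 2, pow_mul, sq]
    push_cast at this
    linear_combination this
  have hsum : ∑' n : ℕ, (s ^ 2) ^ (n + 1) * R (n + 1) ≤
      R N * (s ^ 2 / (1 - s ^ 2)) + c * s ^ N * (s / (1 - s) ^ 2) :=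
    hasSum_le hterm (summable_pow_succ_mul hnonneg hlin (by positivity)
        (by nlinarith)).hasSum
      (((hasSum_pow_succ hs2).mul_left _).add ((hasSum_succ_mul_pow_succ hs).mul_left _))
  have h1s : 0 < 1 - s := by linarith
  calc abelMean R (s ^ 2)
      ≤ (1 - s ^ 2) * (R N * (s ^ 2 / (1 - s ^ 2)) + c * s ^ N * (s / (1 - s) ^ 2)) :=
        mul_le_mul_of_nonneg_left hsum (by nlinarith)
    _ = s ^ 2 * R N + (1 + s) * (c * s ^ N * (s / (1 - s))) := by
        field_simp [show 1 - s ^ 2 ≠ 0 by nlinarith]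
        ring
    _ ≤ R N + 2 * c * s ^ N * (s / (1 - s)) := by
        have : 0 ≤ c * s ^ N * (s / (1 - s)) := by positivity
        have : s ^ 2 * R N ≤ R N := mul_le_of_le_one_left (hnonneg N hN) (by nlinarith)
        nlinarith

end AbelMean

section DiscountedAggregate

variable {R : ℕ → ℝ} {c : ℝ}

lemma le_exp_one_mul_discountedAggregate_inv (hnonneg : ∀ n : ℕ, 1 ≤ n → 0 ≤ R n)
    (hmono : ∀ m n : ℕ, 1 ≤ m → m ≤ n → R m ≤ R n) (hlin : ∀ n : ℕ, 1 ≤ n → R n ≤ c * n)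
    {T : ℕ} (hT : 1 ≤ T) : R T ≤ exp 1 * discountedAggregate R (T : ℝ)⁻¹ := by
  have hT0 : (0 : ℝ) < T := by exact_mod_cast hT
  have h := pow_mul_le_abelMean hnonneg hmono hlin (exp_pos _).le
    (exp_lt_one_iff.mpr (neg_lt_zero.mpr (inv_pos.mpr hT0))) hT
  rw [← exp_nat_mul, mul_neg, mul_inv_cancel₀ hT0.ne', ← discountedAggregate_eq_abelMean] at h
  calc R T = exp 1 * (exp (-1) * R T) := by rw [← mul_assoc, ← exp_add]; simp
    _ ≤ exp 1 * discountedAggregate R (T : ℝ)⁻¹ := by gcongr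

lemma discountedAggregate_le (hnonneg : ∀ n : ℕ, 1 ≤ n → 0 ≤ R n)
    (hmono : ∀ m n : ℕ, 1 ≤ m → m ≤ n → R m ≤ R n) (hlin : ∀ n : ℕ, 1 ≤ n → R n ≤ c * n)
    (hc : 0 ≤ c) {lam : ℝ} (hlam : 0 < lam) {N : ℕ} (hN : 1 ≤ N) :
    discountedAggregate R lam ≤ R N + 4 * c * exp (-(N * lam / 2)) / lam := by
  set s := exp (-(lam / 2))
  have hs1 : s < 1 := exp_lt_one_iff.mpr (by linarith)
  have hsq : exp (-lam) = s ^ 2 := by rw [← exp_nat_mul]; ring_nf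
  have hsN : s ^ N = exp (-(N * lam / 2)) := by rw [← exp_nat_mul]; ring_nf
  have hratio : s / (1 - s) ≤ 2 / lam := by
    simpa using exp_neg_div_one_sub_exp_neg_le (half_pos hlam)
  calc discountedAggregate R lam ≤ R N + 2 * c * s ^ N * (s / (1 - s)) := by
        rw [discountedAggregate_eq_abelMean, hsq]
        exact abelMean_sq_le hnonneg hmono hlin hc (exp_pos _) hs1 hN
    _ ≤ R N + 2 * c * s ^ N * (2 / lam) := by gcongr
    _ = R N + 4 * c * exp (-(N * lam / 2)) / lam := by rw [hsN]; ring

lemma tendsto_div_rpow_of_tendsto_discountedAggregate_mul_rpow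
    (hnonneg : ∀ n : ℕ, 1 ≤ n → 0 ≤ R n)
    (hmono : ∀ m n : ℕ, 1 ≤ m → m ≤ n → R m ≤ R n) (hlin : ∀ n : ℕ, 1 ≤ n → R n ≤ c * n)
    {a : ℝ} (h : Tendsto (fun lam : ℝ => discountedAggregate R lam * lam ^ a) (𝓝[>] 0) (𝓝 0)) :
    Tendsto (fun T : ℕ => R T / (T : ℝ) ^ a) atTop (𝓝 0) := by
  have hinv : Tendsto (fun T : ℕ => (T : ℝ)⁻¹) atTop (𝓝[>] 0) :=
    tendsto_inv_atTop_nhdsGT_zero.comp tendsto_natCast_atTop_atTop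
  refine squeeze_zero' ?_ ?_ (by simpa using (h.comp hinv).const_mul (exp 1))
  · filter_upwards [eventually_ge_atTop 1] with T hT
    exact div_nonneg (hnonneg T hT) (rpow_nonneg T.cast_nonneg a)
  · filter_upwards [eventually_ge_atTop 1] with T hT
    calc R T / (T : ℝ) ^ a ≤ exp 1 * discountedAggregate R (T : ℝ)⁻¹ / (T : ℝ) ^ a := by
          gcongr
          exact le_exp_one_mul_discountedAggregate_inv hnonneg hmono hlin hT
      _ = exp 1 * (discountedAggregate R (T : ℝ)⁻¹ * ((T : ℝ)⁻¹) ^ a) := by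
          rw [inv_rpow T.cast_nonneg, div_eq_mul_inv, mul_assoc]

lemma discountedAggregate_mul_rpow_le (hnonneg : ∀ n : ℕ, 1 ≤ n → 0 ≤ R n)
    (hmono : ∀ m n : ℕ, 1 ≤ m → m ≤ n → R m ≤ R n) (hlin : ∀ n : ℕ, 1 ≤ n → R n ≤ c * n)
    (hc : 0 ≤ c) {a : ℝ} (ha : 0 < a) {lam : ℝ} (hlam0 : 0 < lam) (hlam1 : lam ≤ 1) :
    discountedAggregate R lam * lam ^ a ≤
      2 ^ (a / 2) * (R ⌈lam⁻¹ ^ 2⌉₊ / (⌈lam⁻¹ ^ 2⌉₊ : ℝ) ^ (a / 2)) +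
        4 * c * (lam⁻¹ ^ (1 - a) * exp (-(1 / 2) * lam⁻¹)) := by
  set N := ⌈lam⁻¹ ^ 2⌉₊
  have hN1 : 1 ≤ N := Nat.one_le_iff_ne_zero.mpr (Nat.ceil_pos.mpr (by positivity)).ne'
  have hN0 : (0 : ℝ) < N := by exact_mod_cast hN1
  have hNge : lam⁻¹ ^ 2 ≤ N := Nat.le_ceil _
  have hNle : (N : ℝ) < lam⁻¹ ^ 2 + 1 := Nat.ceil_lt_add_one (by positivity)
  have hpow : lam ^ a ≤ 2 ^ (a / 2) / (N : ℝ) ^ (a / 2) := by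
    have hsq : lam ^ 2 ≤ 2 / N := by
      rw [le_div_iff₀ hN0]
      have : lam ^ 2 * lam⁻¹ ^ 2 = 1 := by rw [← mul_pow, mul_inv_cancel₀ hlam0.ne', one_pow]
      nlinarith
    calc lam ^ a = (lam ^ 2) ^ (a / 2) := by
          rw [← rpow_natCast, ← rpow_mul hlam0.le]; ring_nf
      _ ≤ (2 / N) ^ (a / 2) := by gcongr
      _ = 2 ^ (a / 2) / (N : ℝ) ^ (a / 2) := div_rpow zero_le_two hN0.le _
  have hexp : exp (-(N * lam / 2)) ≤ exp (-(1 / 2) * lam⁻¹) := by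
    have : lam⁻¹ ≤ N * lam := by
      calc lam⁻¹ = lam⁻¹ ^ 2 * lam := by field_simp
        _ ≤ N * lam := by gcongr
    gcongr
    linarith
  have hrpow : lam ^ a / lam = lam⁻¹ ^ (1 - a) := by
    rw [inv_rpow hlam0.le, ← rpow_neg hlam0.le, neg_sub, rpow_sub hlam0, rpow_one]
  calc discountedAggregate R lam * lam ^ a
      ≤ (R N + 4 * c * exp (-(N * lam / 2)) / lam) * lam ^ a := by
        gcongr
        exact discountedAggregate_le hnonneg hmono hlin hc hlam0 hN1
    _ = R N * lam ^ a + 4 * c * (lam ^ a / lam * exp (-(N * lam / 2))) := by ring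
    _ ≤ R N * (2 ^ (a / 2) / (N : ℝ) ^ (a / 2)) +
          4 * c * (lam ^ a / lam * exp (-(1 / 2) * lam⁻¹)) := by
        gcongr
        exact hnonneg N hN1
    _ = _ := by rw [hrpow]; ring

lemma tendsto_discountedAggregate_mul_rpow (hnonneg : ∀ n : ℕ, 1 ≤ n → 0 ≤ R n)
    (hmono : ∀ m n : ℕ, 1 ≤ m → m ≤ n → R m ≤ R n) (hlin : ∀ n : ℕ, 1 ≤ n → R n ≤ c * n)
    (hc : 0 ≤ c) {a : ℝ} (ha : 0 < a)
    (h : Tendsto (fun T : ℕ => R T / (T : ℝ) ^ (a / 2)) atTop (𝓝 0)) :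
    Tendsto (fun lam : ℝ => discountedAggregate R lam * lam ^ a) (𝓝[>] 0) (𝓝 0) := by
  have hN : Tendsto (fun lam : ℝ => ⌈lam⁻¹ ^ 2⌉₊) (𝓝[>] 0) atTop :=
    tendsto_nat_ceil_atTop.comp ((tendsto_pow_atTop two_ne_zero).comp tendsto_inv_nhdsGT_zero)
  have hexp := (tendsto_rpow_mul_exp_neg_mul_atTop_nhds_zero (1 - a) (1 / 2) one_half_pos).comp
    tendsto_inv_nhdsGT_zero
  have hbound := ((h.comp hN).const_mul (2 ^ (a / 2))).add (hexp.const_mul (4 * c))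
  rw [mul_zero, mul_zero, add_zero] at hbound
  refine squeeze_zero' ?_ ?_ hbound
  · filter_upwards [self_mem_nhdsWithin] with lam (hlam : 0 < lam)
    rw [discountedAggregate_eq_abelMean]
    exact mul_nonneg (abelMean_nonneg hnonneg (exp_pos _).le (exp_le_one_iff.mpr (by linarith)))
      (rpow_nonneg hlam.le a)
  · filter_upwards [Ioc_mem_nhdsGT zero_lt_one] with lam ⟨hlam0, hlam1⟩
    exact discountedAggregate_mul_rpow_le hnonneg hmono hlin hc ha hlam0 hlam1

end DiscountedAggregate

theorem consistency_equiv_general (R : ℕ → ℝ) (c : ℝ)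
    (hnonneg : ∀ n : ℕ, 1 ≤ n → 0 ≤ R n)
    (hmono : ∀ m n : ℕ, 1 ≤ m → m ≤ n → R m ≤ R n)
    (hlin : ∀ n : ℕ, 1 ≤ n → R n ≤ c * n) :
    (∀ a : ℝ, 0 < a →
        Tendsto (fun T : ℕ => R T / (T : ℝ) ^ a) atTop (nhds 0)) ↔
    (∀ a : ℝ, 0 < a →
        Tendsto (fun lam : ℝ => discountedAggregate R lam * lam ^ a)
          (nhdsWithin 0 (Set.Ioi 0)) (nhds 0)) := by
  have hc : 0 ≤ c := (hnonneg 1 le_rfl).trans (by simpa using hlin 1 le_rfl)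
  exact ⟨fun h a ha => tendsto_discountedAggregate_mul_rpow hnonneg hmono hlin hc ha
      (h (a / 2) (half_pos ha)),
    fun h a ha => tendsto_div_rpow_of_tendsto_discountedAggregate_mul_rpow hnonneg hmono hlin
      (h a ha)⟩

/-- T-consistency is equivalent to lam-consistency for a nondecreasing nonnegative
sequence growing at most linearly. -/
theorem consistency_equiv (R : ℕ → ℝ) (c : ℝ) (hc : 0 < c)
    (hnonneg : ∀ n : ℕ, 1 ≤ n → 0 ≤ R n)
    (hmono : ∀ m n : ℕ, 1 ≤ m → m ≤ n → R m ≤ R n)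
    (hlin : ∀ n : ℕ, 1 ≤ n → R n ≤ c * n) :
    (∀ a : ℝ, 0 < a →
        Tendsto (fun T : ℕ => R T / (T : ℝ) ^ a) atTop (nhds 0)) ↔
    (∀ a : ℝ, 0 < a →
        Tendsto (fun lam : ℝ => discountedAggregate R lam * lam ^ a)
          (nhdsWithin 0 (Set.Ioi 0)) (nhds 0)) :=
  consistency_equiv_general R c hnonneg hmono hlin
end

section
/- Let (R_n)_{n≥1} be a nondecreasing sequence of nonnegative reals with R_n ≤ c·n for some constant c > 0, and define R^λ = (1 − e^{−λ}) · Σ_{n=1}^∞ e^{−nλ} R_n. Then liminf_{λ→0⁺} R^λ / log(1/λ) ≥ liminf_{T→∞} R_T / log T. In particular, any asymptotic lower bound of the form liminf_{T→∞} R_T / log T ≥ L transfers to liminf_{λ→0⁺} R^λ / log(1/λ) ≥ L. -/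
/-!
Because `R` is nondecreasing and nonnegative, `R^λ ≥ e^{-Tλ} R_T` for every horizon `T ≥ 1`:
drop the terms `n < T` and bound the remaining geometric tail below by `R_T`. Taking
`T = ⌈λ^{-s}⌉` with `0 < s < 1` gives `Tλ ≤ λ^{1-s} + λ → 0` and `log T ≥ s log(1/λ)`, so
`liminf R^λ / log(1/λ) ≥ s · liminf R_T / log T`; let `s → 1`.
-/

open Filter Real

open Topology

section Discounted

variable {R : ℕ → ℝ}

theorem summable_discounted_terms {c : ℝ} (hnonneg : ∀ n : ℕ, 1 ≤ n → 0 ≤ R n)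
    (hlin : ∀ n : ℕ, 1 ≤ n → R n ≤ c * n) {lam : ℝ} (hlam : 0 < lam) :
    Summable fun n : ℕ => Real.exp (-((n : ℝ) + 1) * lam) * R (n + 1) := by
  have hmajor :
      Summable fun n : ℕ => c * (((n + 1 : ℕ) : ℝ) ^ 1 * Real.exp (-lam * (n + 1 : ℕ))) :=
    ((summable_nat_add_iff 1).2 (Real.summable_pow_mul_exp_neg_nat_mul 1 hlam)).mul_left c
  refine hmajor.of_nonneg_of_le
    (fun n => mul_nonneg (Real.exp_pos _).le (hnonneg _ (Nat.le_add_left 1 n))) fun n => ?_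
  have hR := hlin (n + 1) (Nat.le_add_left 1 n)
  push_cast at hR ⊢
  calc Real.exp (-((n : ℝ) + 1) * lam) * R (n + 1)
      ≤ Real.exp (-((n : ℝ) + 1) * lam) * (c * (n + 1)) := by gcongr
    _ = c * ((n + 1) ^ 1 * Real.exp (-lam * (n + 1))) := by ring_nf

theorem exp_neg_mul_le_discountedAggregate (hnonneg : ∀ n : ℕ, 1 ≤ n → 0 ≤ R n)
    (hmono : ∀ m n : ℕ, 1 ≤ m → m ≤ n → R m ≤ R n) {lam : ℝ} (hlam : 0 < lam)
    (hsum : Summable fun n : ℕ => Real.exp (-((n : ℝ) + 1) * lam) * R (n + 1))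
    {T : ℕ} (hT : 1 ≤ T) :
    Real.exp (-(T * lam)) * R T ≤ discountedAggregate R lam := by
  set r := Real.exp (-lam)
  have hr0 : 0 ≤ r := (Real.exp_pos _).le
  have hr1 : r < 1 := Real.exp_lt_one_iff.2 (neg_lt_zero.2 hlam)
  have hpow (n : ℕ) : Real.exp (-((n : ℝ) * lam)) = r ^ n := by
    rw [← Real.exp_nat_mul]; ring_nf
  have htail : ∑' n : ℕ, r ^ (n + T) * R T = r ^ T * R T / (1 - r) := by
    simp_rw [pow_add, mul_assoc, tsum_mul_right, tsum_geometric_of_lt_one hr0 hr1]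
    field_simp
  have htail_le : ∑' n : ℕ, r ^ (n + T) * R T
      ≤ ∑' n : ℕ, Real.exp (-((n : ℝ) + 1) * lam) * R (n + 1) := by
    refine Summable.tsum_le_tsum_of_inj (· + (T - 1)) (add_left_injective (T - 1))
      (fun n _ => mul_nonneg (Real.exp_pos _).le (hnonneg _ (Nat.le_add_left 1 n)))
      (fun n => ?_) ?_ hsum
    · have hidx : n + (T - 1) + 1 = n + T := by omega
      rw [hidx, neg_mul, ← Nat.cast_add_one, hidx, hpow]
      exact mul_le_mul_of_nonneg_left (hmono T (n + T) hT (by omega)) (pow_nonneg hr0 _)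
    · simp_rw [pow_add, mul_assoc]
      exact (summable_geometric_of_lt_one hr0 hr1).mul_right _
  calc Real.exp (-(T * lam)) * R T = (1 - r) * ∑' n : ℕ, r ^ (n + T) * R T := by
        rw [htail, hpow]; field_simp [(sub_pos.2 hr1).ne']
    _ ≤ discountedAggregate R lam := mul_le_mul_of_nonneg_left htail_le (sub_pos.2 hr1).le

end Discounted

section Horizon

variable {s : ℝ}

theorem tendsto_ceil_rpow_neg_nhdsGT_zero (hs : 0 < s) :
    Tendsto (fun lam : ℝ => ⌈lam ^ (-s)⌉₊) (𝓝[>] 0) atTop :=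
  tendsto_nat_ceil_atTop.comp (tendsto_rpow_neg_nhdsGT_zero (neg_lt_zero.2 hs))

theorem tendsto_ceil_rpow_neg_mul_self_nhdsGT_zero (hs : s < 1) :
    Tendsto (fun lam : ℝ => (⌈lam ^ (-s)⌉₊ : ℝ) * lam) (𝓝[>] 0) (𝓝 0) := by
  have hupper : Tendsto (fun lam : ℝ => lam ^ (1 - s) + lam) (𝓝[>] 0) (𝓝 0) := by
    have hcont : ContinuousAt (fun lam : ℝ => lam ^ (1 - s) + lam) 0 :=
      (Real.continuousAt_rpow_const 0 _ (Or.inr (sub_nonneg.2 hs.le))).add continuousAt_id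
    simpa [Real.zero_rpow (sub_ne_zero.2 hs.ne')] using hcont.tendsto.mono_left nhdsWithin_le_nhds
  refine tendsto_of_tendsto_of_tendsto_of_le_of_le' tendsto_const_nhds hupper ?_ ?_
  · filter_upwards [self_mem_nhdsWithin] with lam (hlam : 0 < lam)
    positivity
  · filter_upwards [self_mem_nhdsWithin] with lam (hlam : 0 < lam)
    calc (⌈lam ^ (-s)⌉₊ : ℝ) * lam ≤ (lam ^ (-s) + 1) * lam := by
          gcongr; exact (Nat.ceil_lt_add_one (by positivity)).le
      _ = lam ^ (1 - s) + lam := by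
          rw [add_mul, one_mul, sub_eq_neg_add, Real.rpow_add_one hlam.ne']

theorem mul_log_inv_le_log_ceil_rpow_neg {lam : ℝ} (hlam : 0 < lam) :
    s * Real.log (1 / lam) ≤ Real.log ⌈lam ^ (-s)⌉₊ := by
  calc s * Real.log (1 / lam) = Real.log (lam ^ (-s)) := by
        rw [Real.log_rpow hlam, one_div, Real.log_inv, mul_neg, neg_mul]
    _ ≤ Real.log ⌈lam ^ (-s)⌉₊ := Real.log_le_log (by positivity) (Nat.le_ceil _)

end Horizon

section Transfer

variable {R : ℕ → ℝ} {c : ℝ}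

theorem coe_mul_le_liminf_discountedAggregate_div_log (hnonneg : ∀ n : ℕ, 1 ≤ n → 0 ≤ R n)
    (hmono : ∀ m n : ℕ, 1 ≤ m → m ≤ n → R m ≤ R n) (hlin : ∀ n : ℕ, 1 ≤ n → R n ≤ c * n)
    {x s : ℝ} (hx : 0 ≤ x) (hs0 : 0 < s) (hs1 : s < 1)
    (hR : ∀ᶠ T : ℕ in atTop, x * Real.log T ≤ R T) :
    ((s * x : ℝ) : EReal) ≤
      liminf (fun lam : ℝ => ((discountedAggregate R lam / Real.log (1 / lam) : ℝ) : EReal))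
        (𝓝[>] 0) := by
  set T : ℝ → ℕ := fun lam => ⌈lam ^ (-s)⌉₊
  have hT := tendsto_ceil_rpow_neg_nhdsGT_zero hs0
  have hlower : Tendsto (fun lam => Real.exp (-(T lam * lam)) * (s * x)) (𝓝[>] 0)
      (𝓝 (s * x)) := by
    have hexp : Tendsto (fun lam => -(T lam * lam)) (𝓝[>] 0) (𝓝 0) := by
      simpa using (tendsto_ceil_rpow_neg_mul_self_nhdsGT_zero hs1).neg
    simpa using ((Real.continuous_exp.tendsto 0).comp hexp).mul_const (s * x)
  have hlt_one : ∀ᶠ lam in 𝓝[>] (0 : ℝ), lam < 1 :=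
    (eventually_lt_nhds zero_lt_one).filter_mono nhdsWithin_le_nhds
  have hbound : ∀ᶠ lam in 𝓝[>] (0 : ℝ),
      Real.exp (-(T lam * lam)) * (s * x) ≤ discountedAggregate R lam / Real.log (1 / lam) := by
    filter_upwards [self_mem_nhdsWithin, hlt_one, hT.eventually hR,
      hT.eventually_ge_atTop 1] with lam (hlam : 0 < lam) hlam1 hRT hT1
    have hlog : 0 < Real.log (1 / lam) := Real.log_pos ((one_lt_div hlam).2 hlam1)
    rw [le_div_iff₀ hlog]
    calc Real.exp (-(T lam * lam)) * (s * x) * Real.log (1 / lam)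
        = Real.exp (-(T lam * lam)) * x * (s * Real.log (1 / lam)) := by ring
      _ ≤ Real.exp (-(T lam * lam)) * x * Real.log (T lam) := by
          gcongr; exact mul_log_inv_le_log_ceil_rpow_neg hlam
      _ ≤ Real.exp (-(T lam * lam)) * R (T lam) := by rw [mul_assoc]; gcongr
      _ ≤ discountedAggregate R lam :=
          exp_neg_mul_le_discountedAggregate hnonneg hmono hlam
            (summable_discounted_terms hnonneg hlin hlam) hT1
  rw [← ((continuous_coe_real_ereal.tendsto _).comp hlower).liminf_eq]
  exact liminf_le_liminf (hbound.mono fun _ h => EReal.coe_le_coe_iff.2 h)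

theorem coe_le_liminf_discountedAggregate_div_log (hnonneg : ∀ n : ℕ, 1 ≤ n → 0 ≤ R n)
    (hmono : ∀ m n : ℕ, 1 ≤ m → m ≤ n → R m ≤ R n) (hlin : ∀ n : ℕ, 1 ≤ n → R n ≤ c * n)
    {x : ℝ} (hx : (x : EReal) < liminf (fun T : ℕ => ((R T / Real.log T : ℝ) : EReal)) atTop) :
    (x : EReal) ≤
      liminf (fun lam : ℝ => ((discountedAggregate R lam / Real.log (1 / lam) : ℝ) : EReal))
        (𝓝[>] 0) := by
  have hR : ∀ᶠ T : ℕ in atTop, max x 0 * Real.log T ≤ R T := by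
    filter_upwards [eventually_lt_of_lt_liminf hx, eventually_ge_atTop 2] with T hxT hT
    have hlog : 0 < Real.log T := Real.log_pos (by exact_mod_cast hT)
    rw [max_mul_of_nonneg _ _ hlog.le, zero_mul, max_le_iff]
    exact ⟨(lt_div_iff₀ hlog).1 (EReal.coe_lt_coe_iff.1 hxT) |>.le, hnonneg T (by omega)⟩
  have hs : Tendsto (fun s : ℝ => s * max x 0) (𝓝[<] 1) (𝓝 (max x 0)) := by
    simpa using (tendsto_nhdsWithin_of_tendsto_nhds (tendsto_id (x := 𝓝 (1 : ℝ)))).mul_const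
      (max x 0)
  refine le_trans (EReal.coe_le_coe_iff.2 (le_max_left x 0))
    (le_of_tendsto ((continuous_coe_real_ereal.tendsto _).comp hs) ?_)
  filter_upwards [Ioo_mem_nhdsLT zero_lt_one] with s ⟨hs0, hs1⟩
  exact coe_mul_le_liminf_discountedAggregate_div_log hnonneg hmono hlin (le_max_right x 0)
    hs0 hs1 hR

end Transfer

theorem liminf_discounted_ge_general (R : ℕ → ℝ) (c : ℝ)
    (hnonneg : ∀ n : ℕ, 1 ≤ n → 0 ≤ R n)
    (hmono : ∀ m n : ℕ, 1 ≤ m → m ≤ n → R m ≤ R n)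
    (hlin : ∀ n : ℕ, 1 ≤ n → R n ≤ c * n) :
    (liminf (fun T : ℕ => ((R T / Real.log T : ℝ) : EReal)) atTop ≤
      liminf
        (fun lam : ℝ => ((discountedAggregate R lam / Real.log (1 / lam) : ℝ) : EReal))
        (nhdsWithin 0 (Set.Ioi 0))) ∧
    (∀ L : ℝ,
      (L : EReal) ≤ liminf (fun T : ℕ => ((R T / Real.log T : ℝ) : EReal)) atTop →
      (L : EReal) ≤
        liminf
          (fun lam : ℝ => ((discountedAggregate R lam / Real.log (1 / lam) : ℝ) : EReal))
          (nhdsWithin 0 (Set.Ioi 0))) := by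
  have hmain := EReal.ge_of_forall_gt_iff_ge.1 fun x hx =>
    coe_le_liminf_discountedAggregate_div_log hnonneg hmono hlin hx
  exact ⟨hmain, fun L hL => hL.trans hmain⟩

/-- `liminf_{lam→0⁺} R^lam / log(1/lam) ≥ liminf_{T→∞} R_T / log T` (in `EReal`); in
particular any lower bound `L` on the right-hand liminf transfers to the left one. -/
theorem liminf_discounted_ge (R : ℕ → ℝ) (c : ℝ) (hc : 0 < c)
    (hnonneg : ∀ n : ℕ, 1 ≤ n → 0 ≤ R n)
    (hmono : ∀ m n : ℕ, 1 ≤ m → m ≤ n → R m ≤ R n)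
    (hlin : ∀ n : ℕ, 1 ≤ n → R n ≤ c * n) :
    (liminf (fun T : ℕ => ((R T / Real.log T : ℝ) : EReal)) atTop ≤
      liminf
        (fun lam : ℝ => ((discountedAggregate R lam / Real.log (1 / lam) : ℝ) : EReal))
        (nhdsWithin 0 (Set.Ioi 0))) ∧
    (∀ L : ℝ,
      (L : EReal) ≤ liminf (fun T : ℕ => ((R T / Real.log T : ℝ) : EReal)) atTop →
      (L : EReal) ≤
        liminf
          (fun lam : ℝ => ((discountedAggregate R lam / Real.log (1 / lam) : ℝ) : EReal))
          (nhdsWithin 0 (Set.Ioi 0))) :=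
  liminf_discounted_ge_general R c hnonneg hmono hlin
end

section
/- Let τ ≥ 1/2, and consider a sub-optimal arm a with gap Δ_a > 0 in a bandit instance whose optimal-arm subGaussian constant satisfies σ* ≤ σ and whose noise-gap ratio satisfies σ*/Δ_a ≤ γ, with σ > 0 and γ > 0. Then β_a(τ) := 2 (1/(2τ))^{1/τ} σ*² / Δ_a^{2−1/τ} < 2(σ² + γ²). -/
/-- If `τ ≥ 1/2`, the gap `Δ_a > 0`, the optimal-arm subGaussian constant satisfies
`0 ≤ σ* ≤ σ` and the noise-gap ratio satisfies `σ*/Δ_a ≤ γ` with `σ, γ > 0`, then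
`β_a(τ) = 2 (1/(2τ))^(1/τ) σ*² / Δ_a^(2 - 1/τ) < 2(σ² + γ²)`. -/
theorem betaThreshold_lt (τ Δa σstar σ γ : ℝ)
    (hτ : 1 / 2 ≤ τ) (hΔ : 0 < Δa) (hσstar : 0 ≤ σstar)
    (hσ : 0 < σ) (hγ : 0 < γ)
    (hΦ : σstar ≤ σ) (hΨ : σstar / Δa ≤ γ) :
    2 * (1 / (2 * τ)) ^ (1 / τ) * σstar ^ 2 / Δa ^ (2 - 1 / τ) < 2 * (σ ^ 2 + γ ^ 2) := by
  have hτpos : 0 < τ := lt_of_lt_of_le (by norm_num) hτ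
  have ht : 0 < 1 / τ := by positivity
  have ht2 : 1 / τ ≤ 2 := by
    rw [div_le_iff₀ hτpos]; linarith
  have he : 0 ≤ 2 - 1 / τ := by linarith
  have hΔe : 0 < Δa ^ (2 - 1 / τ) := Real.rpow_pos_of_pos hΔ _
  rcases eq_or_lt_of_le hσstar with h0 | h0
  · rw [← h0]
    have h : 2 * (1 / (2 * τ)) ^ (1 / τ) * (0:ℝ) ^ 2 / Δa ^ (2 - 1 / τ) = 0 := by
      ring
    rw [h]; positivity
  · set M := max σ γ with hM
    have hMpos : 0 < M := lt_max_of_lt_left hσ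
    have hc : (1 / (2 * τ)) ^ (1 / τ) ≤ 1 :=
      Real.rpow_le_one (by positivity)
        (by rw [div_le_one (by linarith)]; linarith) ht.le
    have hsplit : σstar ^ 2 = σstar ^ (1 / τ) * σstar ^ (2 - 1 / τ) := by
      rw [← Real.rpow_natCast σstar 2, ← Real.rpow_add h0]; norm_num
    have hdiv : σstar ^ (2 - 1 / τ) / Δa ^ (2 - 1 / τ) = (σstar / Δa) ^ (2 - 1 / τ) :=
      (Real.div_rpow hσstar hΔ.le _).symm
    have key : σstar ^ (1 / τ) * (σstar / Δa) ^ (2 - 1 / τ) ≤ M ^ (2:ℝ) := by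
      calc σstar ^ (1 / τ) * (σstar / Δa) ^ (2 - 1 / τ)
          ≤ M ^ (1 / τ) * M ^ (2 - 1 / τ) := by
            apply mul_le_mul
            · exact Real.rpow_le_rpow hσstar (le_trans hΦ (le_max_left _ _)) ht.le
            · exact Real.rpow_le_rpow (by positivity) (le_trans hΨ (le_max_right _ _)) he
            · positivity
            · positivity
        _ = M ^ (2:ℝ) := by rw [← Real.rpow_add hMpos]; ring_nf
    have hM2 : M ^ (2:ℝ) = M ^ 2 := by
      rw [← Real.rpow_natCast M 2]; norm_num
    have hMlt : M ^ 2 < σ ^ 2 + γ ^ 2 := by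
      rcases max_cases σ γ with ⟨hm, _⟩ | ⟨hm, _⟩ <;> rw [hM, hm] <;> nlinarith
    have hLHS : 2 * (1 / (2 * τ)) ^ (1 / τ) * σstar ^ 2 / Δa ^ (2 - 1 / τ)
        ≤ 2 * (σstar ^ (1 / τ) * (σstar / Δa) ^ (2 - 1 / τ)) := by
      rw [hsplit]
      have : 2 * (1 / (2 * τ)) ^ (1 / τ) * (σstar ^ (1 / τ) * σstar ^ (2 - 1 / τ)) /
          Δa ^ (2 - 1 / τ)
          = (1 / (2 * τ)) ^ (1 / τ) *
            (2 * (σstar ^ (1 / τ) * (σstar ^ (2 - 1 / τ) / Δa ^ (2 - 1 / τ)))) := by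
        field_simp
      rw [this, hdiv]
      calc (1 / (2 * τ)) ^ (1 / τ) *
            (2 * (σstar ^ (1 / τ) * (σstar / Δa) ^ (2 - 1 / τ)))
          ≤ 1 * (2 * (σstar ^ (1 / τ) * (σstar / Δa) ^ (2 - 1 / τ))) := by
            apply mul_le_mul_of_nonneg_right hc
            positivity
        _ = 2 * (σstar ^ (1 / τ) * (σstar / Δa) ^ (2 - 1 / τ)) := by ring
    calc 2 * (1 / (2 * τ)) ^ (1 / τ) * σstar ^ 2 / Δa ^ (2 - 1 / τ)
        ≤ 2 * (σstar ^ (1 / τ) * (σstar / Δa) ^ (2 - 1 / τ)) := hLHS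
      _ ≤ 2 * M ^ (2:ℝ) := by linarith
      _ = 2 * M ^ 2 := by rw [hM2]
      _ < 2 * (σ ^ 2 + γ ^ 2) := by linarith
end
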